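/- Let φ(n) = ⌈log₂(n+1)⌉. If x, y are positive naturals with x + y ≤ n, then φ(x) + φ(y) ≤ 2·φ(n) − 1, i.e., 1 + φ(x) + φ(y) ≤ 2·φ(n). -/
import Mathlib


/-- Okasaki's potential function: `φ n = ⌈log₂ (n+1)⌉`. -/
def phi (n : ℕ) : ℕ := Nat.clog 2 (n + 1)

lemma phi_key (x y n : ℕ) (hx : 0 < x) (hxy2 : x ≤ y) (hxy : x + y ≤ n) :
    phi x + phi y + 1 ≤ 2 * phi n := by
  have hn2 : 2 ≤ n := by omega
  have hstep : Nat.clog 2 (n + 1) = Nat.clog 2 ((n + 2) / 2) + 1 := by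
    have := Nat.clog_of_two_le (b := 2) (n := n + 1) one_lt_two (by omega)
    simpa [Nat.add_assoc] using this
  have hxle : x + 1 ≤ (n + 2) / 2 := by
    rw [Nat.le_div_iff_mul_le (by norm_num)]
    omega
  have h1 : phi x ≤ Nat.clog 2 ((n + 2) / 2) := Nat.clog_mono_right 2 hxle
  have h2 : phi y ≤ phi n := Nat.clog_mono_right 2 (by omega)
  unfold phi at *
  omega

theorem stmt_12 (x y n : ℕ) (hx : 0 < x) (hy : 0 < y) (hxy : x + y ≤ n) :
    phi x + phi y ≤ 2 * phi n - 1 ∧ 1 + phi x + phi y ≤ 2 * phi n := by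
  have key : phi x + phi y + 1 ≤ 2 * phi n := by
    rcases le_total x y with h | h
    · exact phi_key x y n hx h hxy
    · have := phi_key y x n hy h (by omega)
      omega
  omega
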